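/- arXiv:2501.15027 — 4 statements merged into one kernel-verified Lean document; each statement's English description precedes it below -/
import Mathlib

section
/- If K has characteristic 0, then the set 𝓜₀(M) of all multiplicative arithmetic functions on M is a subgroup of the unit group 𝒜(M)^× (under Dirichlet product), and this subgroup is torsion-free: if f is multiplicative and the n-fold Dirichlet power f^{∗n} = e for some n ≥ 1, then f = e. -/
open scoped BigOperators

/-- The monoid `M` has trivial unit group: the only unit is `1`. -/
def TrivUnits (M : Type*) [CommMonoid M] : Prop := ∀ u : M, IsUnit u → u = 1

/-- `M` is a unique factorization monoid: every element is a product of a multiset of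
irreducible elements, and such a multiset is unique (exact uniqueness, which is the
correct formulation when the unit group is trivial). -/
def IsUFM (M : Type*) [CommMonoid M] : Prop :=
  (∀ a : M, ∃ l : Multiset M, (∀ b ∈ l, Irreducible b) ∧ l.prod = a) ∧
  ∀ l l' : Multiset M, (∀ b ∈ l, Irreducible b) → (∀ b ∈ l', Irreducible b) →
    l.prod = l'.prod → l = l'

/-- The Dirichlet product `(f ∗ g)(a) = ∑_{bc = a} f(b) g(c)`.  (The sum is a
`finsum`, which agrees with the intended finite sum since in a unique factorization
monoid with trivial units every element has only finitely many decompositions.) -/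
noncomputable def dmul (M K : Type*) [CommMonoid M] [Field K] (f g : M → K) : M → K :=
  fun a => ∑ᶠ (p : M × M) (_ : p.1 * p.2 = a), f p.1 * g p.2

open Classical in
/-- The identity arithmetic function `e`: `e 1 = 1` and `e a = 0` for `a ≠ 1`. -/
noncomputable def dOne (M K : Type*) [CommMonoid M] [Field K] : M → K :=
  fun a => if a = 1 then 1 else 0

/-- A prime element of the monoid `M`: a non-unit `p` such that `p ∣ ab` implies
`p ∣ a` or `p ∣ b`. -/
def IsPrimeElem {M : Type*} [CommMonoid M] (p : M) : Prop :=
  ¬IsUnit p ∧ ∀ a b : M, p ∣ a * b → p ∣ a ∨ p ∣ b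

/-- Two elements of `M` are relatively prime if they have no common prime factor. -/
def RelPrime {M : Type*} [CommMonoid M] (a b : M) : Prop :=
  ∀ p : M, IsPrimeElem p → p ∣ a → ¬p ∣ b

/-- A multiplicative arithmetic function: `f 1 = 1` and `f (ab) = f a * f b`
whenever `a` and `b` are relatively prime. -/
def IsMultFn {M K : Type*} [CommMonoid M] [Field K] (f : M → K) : Prop :=
  f 1 = 1 ∧ ∀ a b : M, RelPrime a b → f (a * b) = f a * f b

/-- The `n`-fold Dirichlet power of `f`. -/
noncomputable def dpow {M K : Type*} [CommMonoid M] [Field K] (f : M → K) : ℕ → (M → K)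
  | 0 => dOne M K
  | n + 1 => dmul M K f (dpow f n)

/-!
Factoring into irreducibles identifies `M` with a free commutative monoid, so each `a` has
finitely many factorizations `a = bc`, and for coprime `a`, `b` the factorizations of `ab` are
exactly the products of those of `a` and of `b`; this makes `f ∗ g` multiplicative. The Dirichlet
inverse is built by recursion on the number of prime factors. If `f ∗ g = e` with `f`
multiplicative, expanding `(f ∗ g)(ab)` and using multiplicativity of `g` on proper divisors
(induction) leaves `e(ab) = e(a) e(b) + g(ab) - g(a) g(b)`. For torsion-freeness, take `a` minimal
with `f a ≠ e a`: then `f^{∗n}(a) = n f(a)`, which vanishes in characteristic `0` only if `f a = 0`.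
-/

namespace Multiset

variable {α : Type*}

theorem exists_eq_add_of_le_add {s u v : Multiset α} (h : s ≤ u + v) :
    ∃ s₁ s₂, s₁ ≤ u ∧ s₂ ≤ v ∧ s = s₁ + s₂ := by
  classical
  refine ⟨s ∩ u, s - s ∩ u, inter_le_right, ?_, (add_tsub_cancel_of_le inter_le_left).symm⟩
  rw [le_iff_count]
  intro x
  have hx := le_iff_count.1 h x
  rw [count_add] at hx
  rw [count_sub, count_inter]
  omega

theorem eq_and_eq_of_add_eq_add_of_disjoint {u v s₁ s₂ t₁ t₂ : Multiset α} (huv : Disjoint u v)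
    (hs₁ : s₁ ≤ u) (hs₂ : s₂ ≤ v) (ht₁ : t₁ ≤ u) (ht₂ : t₂ ≤ v) (h : s₁ + s₂ = t₁ + t₂) :
    s₁ = t₁ ∧ s₂ = t₂ := by
  classical
  have filter_mem_left : ∀ w₁ ≤ u, ∀ w₂ ≤ v, filter (· ∈ u) (w₁ + w₂) = w₁ := by
    intro w₁ hw₁ w₂ hw₂
    rw [filter_add, filter_eq_self.2 fun x hx => mem_of_le hw₁ hx,
      filter_eq_nil.2 fun x hx hxu => disjoint_left.1 huv hxu (mem_of_le hw₂ hx), add_zero]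
  have h₁ : s₁ = t₁ := by rw [← filter_mem_left s₁ hs₁ s₂ hs₂, h, filter_mem_left t₁ ht₁ t₂ ht₂]
  exact ⟨h₁, add_left_cancel (h₁ ▸ h)⟩

end Multiset

theorem RelPrime.mono {M : Type*} [CommMonoid M] {a b c d : M} (h : RelPrime a b) (hc : c ∣ a)
    (hd : d ∣ b) : RelPrime c d :=
  fun p hp hpc hpd => h p hp (hpc.trans hc) (hpd.trans hd)

theorem dOne_apply_one {M K : Type*} [CommMonoid M] [Field K] : dOne M K 1 = 1 := if_pos rfl

namespace IsUFM

variable {M : Type*} [CommMonoid M] (hU : IsUFM M)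
include hU

noncomputable def factors (a : M) : Multiset M := (hU.1 a).choose

theorem irreducible_of_mem_factors {a b : M} (h : b ∈ hU.factors a) : Irreducible b :=
  (hU.1 a).choose_spec.1 b h

theorem prod_factors (a : M) : (hU.factors a).prod = a := (hU.1 a).choose_spec.2

theorem factors_prod {l : Multiset M} (hl : ∀ b ∈ l, Irreducible b) : hU.factors l.prod = l :=
  hU.2 _ _ (fun _ => hU.irreducible_of_mem_factors) hl (hU.prod_factors _)

theorem factors_injective : Function.Injective hU.factors := fun a b h => by
  rw [← hU.prod_factors a, ← hU.prod_factors b, h]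

theorem factors_mul (a b : M) : hU.factors (a * b) = hU.factors a + hU.factors b := by
  conv_lhs => rw [← hU.prod_factors a, ← hU.prod_factors b, ← Multiset.prod_add]
  exact hU.factors_prod fun x hx =>
    (Multiset.mem_add.1 hx).elim hU.irreducible_of_mem_factors hU.irreducible_of_mem_factors

theorem factors_one : hU.factors 1 = 0 := by
  simpa using hU.factors_prod (l := 0) (by simp)

theorem factors_eq_zero_iff {a : M} : hU.factors a = 0 ↔ a = 1 :=
  ⟨fun h => hU.factors_injective (h.trans hU.factors_one.symm), fun h => h ▸ hU.factors_one⟩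

theorem eq_one_of_mul_eq_one_left {a b : M} (h : a * b = 1) : a = 1 := by
  rw [← hU.factors_eq_zero_iff, hU.factors_mul] at h
  exact hU.factors_eq_zero_iff.1 (add_eq_zero.1 h).1

theorem eq_one_of_mul_eq_one_right {a b : M} (h : a * b = 1) : b = 1 :=
  hU.eq_one_of_mul_eq_one_left ((mul_comm b a).trans h)

theorem mul_left_cancel {a b c : M} (h : a * b = a * c) : b = c :=
  hU.factors_injective <| add_left_cancel (by rw [← hU.factors_mul, ← hU.factors_mul, h])

theorem eq_one_of_mul_eq_left {a b : M} (h : a * b = a) : b = 1 :=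
  hU.mul_left_cancel (h.trans (mul_one a).symm)

theorem eq_one_of_mul_eq_right {a b : M} (h : a * b = b) : a = 1 :=
  hU.eq_one_of_mul_eq_left ((mul_comm b a).trans h)

theorem dvd_iff_factors_le {a b : M} : b ∣ a ↔ hU.factors b ≤ hU.factors a := by
  classical
  constructor
  · rintro ⟨c, rfl⟩
    rw [hU.factors_mul]
    exact Multiset.le_add_right _ _
  · intro h
    refine ⟨(hU.factors a - hU.factors b).prod, hU.factors_injective ?_⟩
    rw [hU.factors_mul, hU.factors_prod fun x hx =>
      hU.irreducible_of_mem_factors (Multiset.mem_of_le tsub_le_self hx), add_tsub_cancel_of_le h]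

theorem card_factors_lt {a b : M} (h : b ∣ a) (hne : b ≠ a) :
    Multiset.card (hU.factors b) < Multiset.card (hU.factors a) :=
  Multiset.card_lt_card <|
    lt_of_le_of_ne (hU.dvd_iff_factors_le.1 h) fun e => hne (hU.factors_injective e)

theorem induction_on_dvd {P : M → Prop} (a : M)
    (h : ∀ a, (∀ b, b ∣ a → b ≠ a → P b) → P a) : P a :=
  (measure fun a => Multiset.card (hU.factors a)).wf.induction a fun a ih =>
    h a fun b hb hne => ih b (hU.card_factors_lt hb hne)

theorem dvd_iff_mem_factors {p a : M} (hp : Irreducible p) : p ∣ a ↔ p ∈ hU.factors a := by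
  have hfp : hU.factors p = {p} := by simpa using hU.factors_prod (l := {p}) (by simpa using hp)
  rw [hU.dvd_iff_factors_le, hfp, Multiset.singleton_le]

theorem isPrimeElem_of_irreducible {p : M} (hp : Irreducible p) : IsPrimeElem p := by
  refine ⟨hp.not_isUnit, fun a b hab => ?_⟩
  rw [hU.dvd_iff_mem_factors hp, hU.factors_mul, Multiset.mem_add] at hab
  simpa only [hU.dvd_iff_mem_factors hp] using hab

theorem disjoint_factors_of_relPrime {a b : M} (h : RelPrime a b) :
    Disjoint (hU.factors a) (hU.factors b) :=
  Multiset.disjoint_left.2 fun {p} hpa hpb =>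
    have hp := hU.irreducible_of_mem_factors hpa
    h p (hU.isPrimeElem_of_irreducible hp) ((hU.dvd_iff_mem_factors hp).2 hpa)
      ((hU.dvd_iff_mem_factors hp).2 hpb)

theorem exists_dvd_and_dvd_of_dvd_mul {a b c : M} (h : c ∣ a * b) :
    ∃ c₁ c₂, c₁ ∣ a ∧ c₂ ∣ b ∧ c = c₁ * c₂ := by
  rw [hU.dvd_iff_factors_le, hU.factors_mul] at h
  obtain ⟨s₁, s₂, h₁, h₂, hs⟩ := Multiset.exists_eq_add_of_le_add h
  have prod_dvd : ∀ {x : M} {s}, s ≤ hU.factors x → s.prod ∣ x := fun {x s} hs => by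
    rwa [hU.dvd_iff_factors_le, hU.factors_prod fun y hy =>
      hU.irreducible_of_mem_factors (Multiset.mem_of_le hs hy)]
  exact ⟨s₁.prod, s₂.prod, prod_dvd h₁, prod_dvd h₂, by
    rw [← hU.prod_factors c, hs, Multiset.prod_add]⟩

theorem eq_and_eq_of_mul_eq_mul_of_relPrime {a b c₁ c₂ d₁ d₂ : M} (hab : RelPrime a b)
    (hc₁ : c₁ ∣ a) (hc₂ : c₂ ∣ b) (hd₁ : d₁ ∣ a) (hd₂ : d₂ ∣ b) (h : c₁ * c₂ = d₁ * d₂) :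
    c₁ = d₁ ∧ c₂ = d₂ := by
  simp only [hU.dvd_iff_factors_le] at hc₁ hc₂ hd₁ hd₂
  have h' := congrArg hU.factors h
  rw [hU.factors_mul, hU.factors_mul] at h'
  obtain ⟨e₁, e₂⟩ := Multiset.eq_and_eq_of_add_eq_add_of_disjoint
    (hU.disjoint_factors_of_relPrime hab) hc₁ hc₂ hd₁ hd₂ h'
  exact ⟨hU.factors_injective e₁, hU.factors_injective e₂⟩

theorem eq_one_mul_of_snd_mul_snd_eq {a b : M} {p q : M × M} (hp : p.1 * p.2 = a)
    (hq : q.1 * q.2 = b) (h : p.2 * q.2 = a * b) : p = (1, a) ∧ q = (1, b) := by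
  have h₁ : p.1 * q.1 = 1 := hU.eq_one_of_mul_eq_right (b := p.2 * q.2) <| by
    rw [mul_mul_mul_comm, hp, hq, h]
  have hp₁ := hU.eq_one_of_mul_eq_one_left h₁
  have hq₁ := hU.eq_one_of_mul_eq_one_right h₁
  rw [hp₁, one_mul] at hp
  rw [hq₁, one_mul] at hq
  exact ⟨Prod.ext hp₁ hp, Prod.ext hq₁ hq⟩

theorem finite_mulAntidiagonal (a : M) : {p : M × M | p.1 * p.2 = a}.Finite := by
  refine Set.Finite.of_finite_image (f := fun p => hU.factors p.1) ?_ ?_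
  · refine (hU.factors a).powerset.finite_toSet.subset ?_
    rintro _ ⟨p, hp, rfl⟩
    exact Multiset.mem_powerset.2 (hU.dvd_iff_factors_le.1 ⟨p.2, hp.symm⟩)
  · rintro p hp q hq h
    have h₁ : p.1 = q.1 := hU.factors_injective h
    have hq' : q.1 * q.2 = a := hq
    exact Prod.ext h₁ (hU.mul_left_cancel (hp.trans (h₁ ▸ hq').symm))

noncomputable def mulAntidiagonal (a : M) : Finset (M × M) :=
  (hU.finite_mulAntidiagonal a).toFinset

@[simp]
theorem mem_mulAntidiagonal {a : M} {p : M × M} : p ∈ hU.mulAntidiagonal a ↔ p.1 * p.2 = a :=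
  Set.Finite.mem_toFinset _

theorem mulAntidiagonal_one : hU.mulAntidiagonal 1 = {(1, 1)} := by
  ext p
  simp only [mem_mulAntidiagonal, Finset.mem_singleton]
  exact ⟨fun h => Prod.ext (hU.eq_one_of_mul_eq_one_left h) (hU.eq_one_of_mul_eq_one_right h),
    fun h => by simp [h]⟩

/-- Since `a` and `b` share no irreducible factor, a factorization `cd = ab` splits uniquely
into factorizations of `a` and of `b`. -/
theorem sum_mulAntidiagonal_mul {R : Type*} [AddCommMonoid R] {a b : M} (hab : RelPrime a b)
    (F : M × M → R) :
    ∑ r ∈ hU.mulAntidiagonal (a * b), F r =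
      ∑ x ∈ hU.mulAntidiagonal a ×ˢ hU.mulAntidiagonal b, F (x.1.1 * x.2.1, x.1.2 * x.2.2) := by
  symm
  refine Finset.sum_bij (fun x _ => (x.1.1 * x.2.1, x.1.2 * x.2.2)) ?_ ?_ ?_ fun _ _ => rfl
  · rintro ⟨p, q⟩ h
    simp only [Finset.mem_product, mem_mulAntidiagonal] at h ⊢
    rw [mul_mul_mul_comm, h.1, h.2]
  · rintro ⟨p, q⟩ h ⟨p', q'⟩ h' e
    simp only [Finset.mem_product, mem_mulAntidiagonal] at h h'
    obtain ⟨e₁, e₂⟩ := Prod.mk.inj e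
    obtain ⟨hp₁, hq₁⟩ := hU.eq_and_eq_of_mul_eq_mul_of_relPrime hab ⟨p.2, h.1.symm⟩
      ⟨q.2, h.2.symm⟩ ⟨p'.2, h'.1.symm⟩ ⟨q'.2, h'.2.symm⟩ e₁
    obtain ⟨hp₂, hq₂⟩ := hU.eq_and_eq_of_mul_eq_mul_of_relPrime hab (Dvd.intro_left _ h.1)
      (Dvd.intro_left _ h.2) (Dvd.intro_left _ h'.1) (Dvd.intro_left _ h'.2) e₂
    exact Prod.ext (Prod.ext hp₁ hp₂) (Prod.ext hq₁ hq₂)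
  · rintro r hr
    rw [mem_mulAntidiagonal] at hr
    obtain ⟨c₁, c₂, ⟨d₁, hd₁⟩, ⟨d₂, hd₂⟩, hc⟩ := hU.exists_dvd_and_dvd_of_dvd_mul ⟨r.2, hr.symm⟩
    have hr₂ : r.2 = d₁ * d₂ := hU.mul_left_cancel (a := r.1) <| by
      rw [hr, hc, hd₁, hd₂, mul_mul_mul_comm]
    exact ⟨((c₁, d₁), (c₂, d₂)), by simp [hd₁, hd₂], Prod.ext hc.symm hr₂.symm⟩

variable {K : Type*} [Field K]

theorem dmul_apply (f g : M → K) (a : M) :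
    dmul M K f g a = ∑ p ∈ hU.mulAntidiagonal a, f p.1 * g p.2 :=
  finsum_mem_eq_finite_toFinset_sum _ (hU.finite_mulAntidiagonal a)

theorem dmul_apply_one (f g : M → K) : dmul M K f g 1 = f 1 * g 1 := by
  rw [hU.dmul_apply, hU.mulAntidiagonal_one, Finset.sum_singleton]

theorem dmul_apply_mul {f : M → K} (hf : IsMultFn f) (g : M → K) {a b : M} (hab : RelPrime a b) :
    dmul M K f g (a * b) = ∑ x ∈ hU.mulAntidiagonal a ×ˢ hU.mulAntidiagonal b,
      f x.1.1 * f x.2.1 * g (x.1.2 * x.2.2) := by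
  rw [hU.dmul_apply, hU.sum_mulAntidiagonal_mul hab]
  refine Finset.sum_congr rfl fun x hx => ?_
  simp only [Finset.mem_product, mem_mulAntidiagonal] at hx
  rw [hf.2 _ _ (hab.mono ⟨x.1.2, hx.1.symm⟩ ⟨x.2.2, hx.2.symm⟩)]

theorem isMultFn_dOne : IsMultFn (dOne M K) := by
  refine ⟨dOne_apply_one, fun a b _ => ?_⟩
  by_cases ha : a = 1
  · rw [ha, one_mul, dOne_apply_one, one_mul]
  · have hab : a * b ≠ 1 := fun h => ha (hU.eq_one_of_mul_eq_one_left h)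
    simp [dOne, ha, hab]

theorem isMultFn_dmul {f g : M → K} (hf : IsMultFn f) (hg : IsMultFn g) :
    IsMultFn (dmul M K f g) := by
  refine ⟨by rw [hU.dmul_apply_one, hf.1, hg.1, mul_one], fun a b hab => ?_⟩
  rw [hU.dmul_apply_mul hf g hab, hU.dmul_apply, hU.dmul_apply, Finset.sum_mul_sum,
    Finset.sum_product]
  refine Finset.sum_congr rfl fun p hp => Finset.sum_congr rfl fun q hq => ?_
  rw [mem_mulAntidiagonal] at hp hq
  rw [hg.2 _ _ (hab.mono (Dvd.intro_left _ hp) (Dvd.intro_left _ hq))]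
  ring

open Classical in
noncomputable def dinv (f : M → K) (a : M) : K :=
  dOne M K a - ∑ p ∈ ((hU.mulAntidiagonal a).filter fun p => p.1 ≠ 1).attach,
    f p.1.1 * dinv f p.1.2
termination_by Multiset.card (hU.factors a)
decreasing_by
  obtain ⟨hp, hp₁⟩ := Finset.mem_filter.1 p.2
  rw [mem_mulAntidiagonal] at hp
  exact hU.card_factors_lt (Dvd.intro_left _ hp) fun h => hp₁ (hU.eq_one_of_mul_eq_right (h ▸ hp))

theorem dmul_dinv {f : M → K} (hf : f 1 = 1) : dmul M K f (hU.dinv f) = dOne M K := by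
  classical
  funext a
  rw [hU.dmul_apply, ← Finset.sum_filter_add_sum_filter_not _ fun p => p.1 ≠ 1]
  have hfilter : ((hU.mulAntidiagonal a).filter fun p => ¬p.1 ≠ 1) = {(1, a)} := by
    ext p
    simp only [Finset.mem_filter, mem_mulAntidiagonal, not_not, Finset.mem_singleton]
    exact ⟨fun ⟨h, h₁⟩ => Prod.ext h₁ (by rw [← h, h₁, one_mul]), fun h => by simp [h]⟩
  rw [hfilter, Finset.sum_singleton, hf, one_mul, dinv, ← Finset.sum_attach _ fun p => _]
  ring

theorem isMultFn_of_dmul_eq_dOne {f g : M → K} (hf : IsMultFn f) (hfg : dmul M K f g = dOne M K) :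
    IsMultFn g := by
  have hg₁ : g 1 = 1 := by
    simpa [hU.dmul_apply_one, hf.1, dOne] using congrFun hfg 1
  suffices ∀ c a b, a * b = c → RelPrime a b → g (a * b) = g a * g b from
    ⟨hg₁, fun a b => this _ a b rfl⟩
  intro c
  induction c using hU.induction_on_dvd with
  | h c ih =>
  rintro a b rfl hab
  classical
  set s := hU.mulAntidiagonal a ×ˢ hU.mulAntidiagonal b
  set x₀ : (M × M) × (M × M) := ((1, a), (1, b))
  let F : (M × M) × (M × M) → K := fun x => f x.1.1 * f x.2.1 * g (x.1.2 * x.2.2)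
  let G : (M × M) × (M × M) → K := fun x => f x.1.1 * g x.1.2 * (f x.2.1 * g x.2.2)
  have hF : ∑ x ∈ s, F x = dOne M K a * dOne M K b := by
    rw [← hU.dmul_apply_mul hf g hab, hfg, (hU.isMultFn_dOne (K := K)).2 a b hab]
  have hG : ∑ x ∈ s, G x = dOne M K a * dOne M K b := by
    change ∑ x ∈ s, f x.1.1 * g x.1.2 * (f x.2.1 * g x.2.2) = _
    rw [Finset.sum_product]
    dsimp only
    rw [← Finset.sum_mul_sum, ← hU.dmul_apply, ← hU.dmul_apply, hfg]
  -- Off `x₀` the value `g (x.1.2 * x.2.2)` is taken at a proper divisor of `a * b`.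
  have hFG : ∀ x ∈ s, x ≠ x₀ → F x - G x = 0 := by
    rintro ⟨p, q⟩ hx hne
    simp only [s, Finset.mem_product, mem_mulAntidiagonal] at hx
    have hproper : p.2 * q.2 ≠ a * b := fun h => hne <| by
      obtain ⟨rfl, rfl⟩ := hU.eq_one_mul_of_snd_mul_snd_eq hx.1 hx.2 h
      rfl
    have hdvd : p.2 * q.2 ∣ a * b := mul_dvd_mul (Dvd.intro_left _ hx.1) (Dvd.intro_left _ hx.2)
    simp only [F, G]
    rw [sub_eq_zero, ih _ hdvd hproper p.2 q.2 rfl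
      (hab.mono (Dvd.intro_left _ hx.1) (Dvd.intro_left _ hx.2))]
    ring
  have hx₀ : x₀ ∈ s := by simp [s, x₀]
  have key : F x₀ - G x₀ = 0 := by
    rw [← Finset.sum_eq_single_of_mem x₀ hx₀ hFG, Finset.sum_sub_distrib, hF, hG, sub_self]
  simpa [F, G, x₀, hf.1, sub_eq_zero] using key

open Classical in
theorem dmul_apply_of_dvd {f : M → K} (hf : f 1 = 1) {a : M} (ha : a ≠ 1)
    (hfa : ∀ c, c ∣ a → c ≠ 1 → c ≠ a → f c = 0) (g : M → K) {b : M} (hb : b ∣ a) :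
    dmul M K f g b = g b + if b = a then f a * g 1 else 0 := by
  have hterm : ∀ p ∈ hU.mulAntidiagonal b, f p.1 * g p.2 =
      (if p = (1, b) then f p.1 * g p.2 else 0) + if p = (a, 1) then f p.1 * g p.2 else 0 := by
    rintro p hp
    rw [mem_mulAntidiagonal] at hp
    by_cases hp₁ : p = (1, b)
    · subst hp₁
      simp [Ne.symm ha]
    by_cases hpa : p = (a, 1)
    · subst hpa
      simp [ha]
    have hne₁ : p.1 ≠ 1 := fun h => hp₁ (Prod.ext h (by rw [← hp, h, one_mul]))
    have hnea : p.1 ≠ a := by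
      rintro h
      obtain ⟨k, hk⟩ := hb
      have h₂ : p.2 = 1 := hU.eq_one_of_mul_eq_one_left <| hU.eq_one_of_mul_eq_left (a := a) <| by
        rw [← mul_assoc, ← h, hp, ← hk, h]
      exact hpa (Prod.ext h h₂)
    simp [hp₁, hpa, hfa p.1 ((Dvd.intro _ hp).trans hb) hne₁ hnea]
  rw [hU.dmul_apply, Finset.sum_congr rfl hterm, Finset.sum_add_distrib, Finset.sum_ite_eq',
    Finset.sum_ite_eq']
  simp [hf, eq_comm (a := b)]

open Classical in
theorem dpow_apply_of_dvd {f : M → K} (hf : f 1 = 1) {a : M} (ha : a ≠ 1)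
    (hfa : ∀ c, c ∣ a → c ≠ 1 → c ≠ a → f c = 0) (n : ℕ) {b : M} (hb : b ∣ a) :
    dpow f n b = dOne M K b + if b = a then n * f a else 0 := by
  induction n generalizing b with
  | zero => simp [dpow]
  | succ n ih =>
    rw [dpow, hU.dmul_apply_of_dvd hf ha hfa _ hb, ih hb, ih (one_dvd a), if_neg (Ne.symm ha),
      add_zero, dOne_apply_one]
    split_ifs <;> push_cast <;> ring

theorem eq_dOne_of_dpow_eq_dOne [CharZero K] {f : M → K} (hf : f 1 = 1) {n : ℕ} (hn : n ≠ 0)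
    (h : dpow f n = dOne M K) : f = dOne M K := by
  funext a
  induction a using hU.induction_on_dvd with
  | h a ih =>
  by_cases ha : a = 1
  · rw [ha, hf, dOne_apply_one]
  have hfa : ∀ c, c ∣ a → c ≠ 1 → c ≠ a → f c = 0 := fun c hc hc₁ hca =>
    (ih c hc hca).trans (if_neg hc₁)
  have hpow := hU.dpow_apply_of_dvd hf ha hfa n dvd_rfl
  rw [h, if_pos rfl, left_eq_add, mul_eq_zero] at hpow
  rw [hpow.resolve_left (Nat.cast_ne_zero.2 hn), dOne, if_neg ha]

end IsUFM

theorem statement2_general {M K : Type*} [CommMonoid M] [Field K] [CharZero K]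
    (hU : IsUFM M) :
    -- 𝓜₀(M) contains the identity e
    IsMultFn (dOne M K) ∧
    -- every multiplicative function is a unit of 𝒜(M)
    (∀ f : M → K, IsMultFn f → ∃ g : M → K, dmul M K f g = dOne M K) ∧
    -- 𝓜₀(M) is closed under the Dirichlet product
    (∀ f g : M → K, IsMultFn f → IsMultFn g → IsMultFn (dmul M K f g)) ∧
    -- 𝓜₀(M) is closed under Dirichlet inverses
    (∀ f g : M → K, IsMultFn f → dmul M K f g = dOne M K → IsMultFn g) ∧
    -- torsion-freeness
    (∀ (f : M → K) (n : ℕ), IsMultFn f → 1 ≤ n → dpow f n = dOne M K → f = dOne M K) :=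
  ⟨hU.isMultFn_dOne, fun f hf => ⟨hU.dinv f, hU.dmul_dinv hf.1⟩,
    fun _ _ => hU.isMultFn_dmul, fun _ _ hf => hU.isMultFn_of_dmul_eq_dOne hf,
    fun _ _ hf hn => hU.eq_dOne_of_dpow_eq_dOne hf.1 (Nat.one_le_iff_ne_zero.1 hn)⟩

theorem statement2 {M K : Type*} [CommMonoid M] [Field K] [CharZero K]
    (hT : TrivUnits M) (hU : IsUFM M) :
    -- 𝓜₀(M) contains the identity e
    IsMultFn (dOne M K) ∧
    -- every multiplicative function is a unit of 𝒜(M)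
    (∀ f : M → K, IsMultFn f → ∃ g : M → K, dmul M K f g = dOne M K) ∧
    -- 𝓜₀(M) is closed under the Dirichlet product
    (∀ f g : M → K, IsMultFn f → IsMultFn g → IsMultFn (dmul M K f g)) ∧
    -- 𝓜₀(M) is closed under Dirichlet inverses
    (∀ f g : M → K, IsMultFn f → dmul M K f g = dOne M K → IsMultFn g) ∧
    -- torsion-freeness
    (∀ (f : M → K) (n : ℕ), IsMultFn f → 1 ≤ n → dpow f n = dOne M K → f = dOne M K) :=
  statement2_general hU
end

section
/- For x ∈ A∖{0} and any family {y_i} ⊆ A∖{0}: if 𝒟(x) ⊆ ∪_i 𝒟(y_i), then 𝒟(x) ⊆ 𝒟(y_i) for some single index i. Consequently each set 𝒟(x), and in particular the whole space 𝓜(A) = 𝒟(1), is quasi-compact. -/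
open Ideal

/-- A totally multiplicative arithmetic function on the monoid `I_A` of nonzero
ideals of `A`, with values in `K`.  It is encoded as a function on all ideals,
with `f(A) = 1`, `f(𝔞𝔟) = f(𝔞) f(𝔟)` for nonzero ideals `𝔞, 𝔟`, and the
convention `f((0)) = 0`. -/
structure TotMult (A K : Type*) [CommRing A] [Field K] where
  toFun : Ideal A → K
  map_top : toFun ⊤ = 1
  map_mul : ∀ I J : Ideal A, I ≠ ⊥ → J ≠ ⊥ → toFun (I * J) = toFun I * toFun J
  map_bot : toFun ⊥ = 0

/-- The basic open set 𝒟(a) = {f ∈ 𝓜(A) : f(aA) ≠ 0}. -/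
def Dset (A K : Type*) [CommRing A] [Field K] (a : A) : Set (TotMult A K) :=
  {f | f.toFun (Ideal.span {a}) ≠ 0}

/-- The topology on 𝓜(A) whose closed sets are the sets
𝒱(S) = {f : f(aA) = 0 for all a ∈ S}, S ⊆ A∖{0}; equivalently, the topology with
basis of open sets the sets 𝒟(a) for a ∈ A∖{0} (the family of such 𝒟(a) is closed
under finite intersections, since 𝒟(a) ∩ 𝒟(b) = 𝒟(ab) and 𝒟(1) is the whole
space, so the topology it generates has exactly the arbitrary unions
∪_{a ∈ S} 𝒟(a) = complement of 𝒱(S) as its open sets). -/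
instance totMultTopology (A K : Type*) [CommRing A] [Field K] :
    TopologicalSpace (TotMult A K) :=
  TopologicalSpace.generateFrom {U | ∃ a : A, a ≠ 0 ∧ U = Dset A K a}

/-- 𝒵(f), the set of prime ideal zeros of `f`: maximal ideals `𝔭` with `f(𝔭) = 0`. -/
def Zset (A K : Type*) [CommRing A] [Field K] (f : TotMult A K) : Set (Ideal A) :=
  {p | p.IsMaximal ∧ f.toFun p = 0}

universe u

/-! Over a Dedekind domain, `f(I) ≠ 0` iff `f` does not vanish at any prime divisor of `I`, so
`𝒟(x) ⊆ 𝒟(y)` as soon as every prime divisor of `y` divides `x`. The indicator of the nonzero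
ideals whose prime divisors all divide `x` is totally multiplicative and lies in `𝒟(x)`; if it lies
in `𝒟(y)`, every prime divisor of `y` divides `x`. So a cover of `𝒟(x)` by basic open sets has one
member containing `𝒟(x)`, and Alexander's subbasis theorem gives quasi-compactness. -/

namespace Ideal

theorem forall_isPrime_mul_le_iff {A : Type*} [CommRing A] {p : Ideal A → Prop}
    {I J : Ideal A} :
    (∀ P : Ideal A, P.IsPrime → I * J ≤ P → p P) ↔
      (∀ P : Ideal A, P.IsPrime → I ≤ P → p P) ∧ (∀ P : Ideal A, P.IsPrime → J ≤ P → p P) := by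
  refine ⟨fun h => ⟨fun P hP hI => h P hP (mul_le_left.trans hI),
    fun P hP hJ => h P hP (mul_le_right.trans hJ)⟩, fun ⟨hI, hJ⟩ P hP hIJ => ?_⟩
  rcases hP.mul_le.mp hIJ with h | h
  exacts [hI P hP h, hJ P hP h]

end Ideal

namespace TotMult

variable {A K : Type*} [CommRing A] [Field K]

noncomputable def primeIndicator [IsDomain A] (S : Set (Ideal A)) : TotMult A K where
  toFun I := open Classical in
    if I ≠ ⊥ ∧ ∀ P : Ideal A, P.IsPrime → I ≤ P → P ∈ S then 1 else 0
  map_top := if_pos ⟨top_ne_bot, fun _ hP hle => absurd (top_le_iff.mp hle) hP.ne_top⟩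
  map_mul I J hI hJ := by
    classical
    have hIJ : I * J ≠ ⊥ := by rw [Ne, Ideal.mul_eq_bot]; tauto
    rw [ite_zero_mul_ite_zero, one_mul]
    refine if_congr ?_ rfl rfl
    rw [Ideal.forall_isPrime_mul_le_iff]
    tauto
  map_bot := if_neg fun h => h.1 rfl

theorem primeIndicator_ne_zero_iff [IsDomain A] {S : Set (Ideal A)} {I : Ideal A} :
    (primeIndicator (K := K) S).toFun I ≠ 0 ↔
      I ≠ ⊥ ∧ ∀ P : Ideal A, P.IsPrime → I ≤ P → P ∈ S := by
  simp only [primeIndicator]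
  split_ifs <;> simp_all

theorem map_ne_zero_iff [IsDedekindDomain A] (f : TotMult A K) {I : Ideal A} (hI : I ≠ ⊥) :
    f.toFun I ≠ 0 ↔ ∀ P : Ideal A, P.IsPrime → I ≤ P → f.toFun P ≠ 0 := by
  refine ⟨fun hfI P _ hIP => ?_, fun h => ?_⟩
  · obtain ⟨J, rfl⟩ := Ideal.dvd_iff_le.mpr hIP
    rw [Ne, Ideal.mul_eq_bot, not_or] at hI
    rw [f.map_mul P J hI.1 hI.2] at hfI
    exact left_ne_zero_of_mul hfI
  induction I using UniqueFactorizationMonoid.induction_on_prime with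
  | h₁ => exact absurd rfl hI
  | h₂ I hu => rw [Ideal.isUnit_iff.mp hu, f.map_top]; exact one_ne_zero
  | h₃ I p hI0 hp ih =>
    have hp0 : p ≠ ⊥ := hp.ne_zero
    rw [f.map_mul p I hp0 hI0]
    refine mul_ne_zero (h p ((Ideal.prime_iff_isPrime hp0).mp hp) Ideal.mul_le_left) ?_
    exact ih hI0 fun P hP hIP => h P hP (Ideal.mul_le_right.trans hIP)

end TotMult

theorem Dset_one (A K : Type*) [CommRing A] [Field K] : Dset A K 1 = Set.univ := by
  ext f
  simp [Dset, Ideal.span_singleton_one, f.map_top]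

section Dset

variable {A K : Type*} [CommRing A] [IsDedekindDomain A] [Field K]

theorem Dset_subset_Dset {x y : A} (hy : y ≠ 0)
    (h : ∀ P : Ideal A, P.IsPrime → Ideal.span {y} ≤ P → Ideal.span {x} ≤ P) :
    Dset A K x ⊆ Dset A K y := by
  intro f hf
  have hx : x ≠ 0 := by
    rintro rfl
    exact hf (by rw [Ideal.span_singleton_eq_bot.mpr rfl, f.map_bot])
  exact (f.map_ne_zero_iff (Ideal.span_singleton_eq_bot.not.mpr hy)).mpr fun P hP hyP =>
    (f.map_ne_zero_iff (Ideal.span_singleton_eq_bot.not.mpr hx)).mp hf P hP (h P hP hyP)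

theorem Dset_subset_of_subset_iUnion {ι : Sort*} {x : A} (hx : x ≠ 0) {y : ι → A}
    (hy : ∀ i, y i ≠ 0) (hcover : Dset A K x ⊆ ⋃ i, Dset A K (y i)) :
    ∃ i, Dset A K x ⊆ Dset A K (y i) := by
  have hfx : TotMult.primeIndicator {P | Ideal.span {x} ≤ P} ∈ Dset A K x :=
    TotMult.primeIndicator_ne_zero_iff.mpr
      ⟨Ideal.span_singleton_eq_bot.not.mpr hx, fun _ _ h => h⟩
  obtain ⟨i, hi⟩ := Set.mem_iUnion.mp (hcover hfx)
  exact ⟨i, Dset_subset_Dset (hy i) (TotMult.primeIndicator_ne_zero_iff.mp hi).2⟩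

theorem isCompact_Dset {x : A} (hx : x ≠ 0) : IsCompact (Dset A K x) := by
  refine isCompact_generateFrom rfl fun 𝒰 h𝒰 hcover => ?_
  choose y hy hUy using fun U : 𝒰 => h𝒰 U.2
  have hcover' : Dset A K x ⊆ ⋃ U : 𝒰, Dset A K (y U) := by
    rwa [Set.sUnion_eq_iUnion, Set.iUnion_congr hUy] at hcover
  obtain ⟨U, hU⟩ := Dset_subset_of_subset_iUnion hx hy hcover'
  exact ⟨{U.1}, Set.singleton_subset_iff.mpr U.2, Set.finite_singleton _,
    by simpa [hUy U] using hU⟩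

end Dset

theorem statement8_general (A K : Type*) [CommRing A] [IsDedekindDomain A]
    [Field K] (x : A) (hx : x ≠ 0) :
    (∀ (ι : Type u) (y : ι → A), (∀ i, y i ≠ 0) →
      Dset A K x ⊆ ⋃ i, Dset A K (y i) → ∃ i, Dset A K x ⊆ Dset A K (y i)) ∧
    IsCompact (Dset A K x) ∧
    CompactSpace (TotMult A K) :=
  ⟨fun _ _ hy hcover => Dset_subset_of_subset_iUnion hx hy hcover, isCompact_Dset hx,
    ⟨Dset_one A K ▸ isCompact_Dset one_ne_zero⟩⟩

theorem statement8 (A K : Type*) [CommRing A] [IsDomain A] [IsDedekindDomain A]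
    (hA : ¬IsField A) [Field K] (x : A) (hx : x ≠ 0) :
    (∀ (ι : Type u) (y : ι → A), (∀ i, y i ≠ 0) →
      Dset A K x ⊆ ⋃ i, Dset A K (y i) → ∃ i, Dset A K x ⊆ Dset A K (y i)) ∧
    IsCompact (Dset A K x) ∧
    CompactSpace (TotMult A K) :=
  statement8_general A K x hx
end

section
/- Let 𝔭₁, …, 𝔭_m be maximal ideals of A, let 𝔭_i^* = 𝔭_i ∖ {0}, and let P = 𝔭₁^* ∪ ⋯ ∪ 𝔭_m^* ⊆ A∖{0}. Then 𝓘(𝒱(P)) = P, where for Y ⊆ 𝓜(A), 𝓘(Y) = {a ∈ A∖{0} : f(aA) = 0 for all f ∈ Y} and 𝒱(P) = {f ∈ 𝓜(A) : f(aA) = 0 for all a ∈ P}. -/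
open Ideal

/-- 𝒱(S) = {f ∈ 𝓜(A) : f(aA) = 0 for all a ∈ S}, for S ⊆ A∖{0}. -/
def Vset (A K : Type*) [CommRing A] [Field K] (S : Set A) : Set (TotMult A K) :=
  {f | ∀ a ∈ S, f.toFun (Ideal.span {a}) = 0}

/-- 𝓘(Y) = {a ∈ A∖{0} : f(aA) = 0 for all f ∈ Y}, for Y ⊆ 𝓜(A). -/
def Iset (A K : Type*) [CommRing A] [Field K] (Y : Set (TotMult A K)) : Set A :=
  {a | a ≠ 0 ∧ ∀ f ∈ Y, f.toFun (Ideal.span {a}) = 0}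

/-!
The inclusion `P ⊆ 𝓘(𝒱(P))` is formal. Conversely, if `a ≠ 0` lies in no `𝔭ᵢ`, the indicator
function of the nonzero ideals contained in no `𝔭ᵢ` is totally multiplicative (because the `𝔭ᵢ`
are prime), vanishes on `P`, and takes the value `1` at `aA`; so `a ∉ 𝓘(𝒱(P))`.
-/

section AvoidsAll

variable {A : Type*} [CommRing A] {ι : Type*} (p : ι → Ideal A)

def AvoidsAll (I : Ideal A) : Prop :=
  I ≠ ⊥ ∧ ∀ i, ¬I ≤ p i

variable {p}

lemma avoidsAll_mul [NoZeroDivisors A] (hp : ∀ i, (p i).IsPrime) {I J : Ideal A} :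
    AvoidsAll p (I * J) ↔ AvoidsAll p I ∧ AvoidsAll p J := by
  have hmul_le : ∀ i, I * J ≤ p i ↔ I ≤ p i ∨ J ≤ p i := fun i => (hp i).mul_le
  simp only [AvoidsAll, ne_eq, Ideal.mul_eq_bot, hmul_le]
  grind

lemma avoidsAll_top [Nontrivial A] (hp : ∀ i, (p i).IsPrime) : AvoidsAll p (⊤ : Ideal A) :=
  ⟨top_ne_bot, fun i h => (hp i).ne_top (top_le_iff.mp h)⟩

lemma avoidsAll_span_singleton_iff {a : A} :
    AvoidsAll p (Ideal.span {a}) ↔ a ≠ 0 ∧ ∀ i, a ∉ p i := by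
  simp only [AvoidsAll, ne_eq, Ideal.span_singleton_eq_bot, Ideal.span_singleton_le_iff_mem]

variable (K : Type*) [Field K]

open Classical in
noncomputable def TotMult.indicatorAvoidsAll [IsDomain A] (hp : ∀ i, (p i).IsPrime) :
    TotMult A K where
  toFun I := if AvoidsAll p I then 1 else 0
  map_top := if_pos (avoidsAll_top hp)
  map_mul I J _ _ := by simp only [ite_zero_mul_ite_zero, one_mul, avoidsAll_mul hp]
  map_bot := if_neg fun h => h.1 rfl

variable [IsDomain A] (hp : ∀ i, (p i).IsPrime)

lemma indicatorAvoidsAll_mem_Vset :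
    TotMult.indicatorAvoidsAll K hp ∈ Vset A K {a : A | a ≠ 0 ∧ ∃ i, a ∈ p i} := by
  rintro a ⟨-, i, hai⟩
  exact if_neg fun h => (avoidsAll_span_singleton_iff.mp h).2 i hai

lemma indicatorAvoidsAll_span_singleton {a : A} (ha : a ≠ 0) (hout : ∀ i, a ∉ p i) :
    (TotMult.indicatorAvoidsAll K hp).toFun (Ideal.span {a}) = 1 :=
  if_pos (avoidsAll_span_singleton_iff.mpr ⟨ha, hout⟩)

end AvoidsAll

lemma subset_Iset_Vset {A : Type*} [CommRing A] (K : Type*) [Field K] {S : Set A}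
    (hS : ∀ a ∈ S, a ≠ 0) : S ⊆ Iset A K (Vset A K S) :=
  fun a ha => ⟨hS a ha, fun _ hf => hf a ha⟩

theorem statement14_general (A K : Type*) [CommRing A] [IsDomain A]
    [Field K] (m : ℕ) (p : Fin m → Ideal A)
    (hp : ∀ i, (p i).IsMaximal) :
    Iset A K (Vset A K {a : A | a ≠ 0 ∧ ∃ i, a ∈ p i}) =
      {a : A | a ≠ 0 ∧ ∃ i, a ∈ p i} := by
  refine Set.Subset.antisymm ?_ (subset_Iset_Vset K fun a ha => ha.1)
  rintro a ⟨ha, hV⟩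
  refine ⟨ha, not_forall_not.mp fun hout => one_ne_zero (α := K) ?_⟩
  have hprime : ∀ i, (p i).IsPrime := fun i => (hp i).isPrime
  rw [← indicatorAvoidsAll_span_singleton K hprime ha hout]
  exact hV _ (indicatorAvoidsAll_mem_Vset K hprime)

theorem statement14 (A K : Type*) [CommRing A] [IsDomain A] [IsDedekindDomain A]
    (hA : ¬IsField A) [Field K] (m : ℕ) (p : Fin m → Ideal A)
    (hp : ∀ i, (p i).IsMaximal) :
    Iset A K (Vset A K {a : A | a ≠ 0 ∧ ∃ i, a ∈ p i}) =
      {a : A | a ≠ 0 ∧ ∃ i, a ∈ p i} :=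
  statement14_general A K m p hp
end

section
/- The topological space 𝓜(A) is a Noetherian topological space (every descending chain of closed subsets stabilizes) if and only if A has only finitely many maximal ideals. -/
/-!
Since a nonzero ideal of a Dedekind domain is a product of maximal ideals, `f(aA) ≠ 0` holds iff
`f` does not vanish at any maximal ideal containing `a`. Hence 𝒟(a) depends only on the finite set
of maximal ideals containing `a`, and if `Max(A)` is finite the topology is generated by finitely
many sets, so it has only finitely many open sets.

Conversely, given distinct maximal ideals `p₀, p₁, …`, prime avoidance yields `aₙ ∈ pₙ₊₁` lying
outside `p₀, …, pₙ`. The function that is `1` on the nonzero ideals contained in none of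
`p₀, …, p_N` and `0` otherwise lies in 𝒟(a_N) but in none of 𝒟(a₀), …, 𝒟(a_{N-1}), so the open sets
`⋃_{i<n} 𝒟(aᵢ)` form a strictly increasing chain.
-/

open Ideal

open TopologicalSpace Topology

theorem TopologicalSpace.noetherianSpace_generateFrom {X : Type*} {G : Set (Set X)}
    (hG : G.Finite) : @NoetherianSpace X (generateFrom G) := by
  have : Finite G := hG.to_subtype
  have hind :
      generateFrom G = induced (fun (x : X) (g : G) => x ∈ (g : Set X)) inferInstance := by
    simp only [induced_to_pi, sierpinskiSpace, induced_generateFrom_eq, ← generateFrom_iUnion]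
    congr 1
    ext s
    simp
  rw [hind]
  exact @IsInducing.noetherianSpace _ _ _ (induced _ _) _ _ (IsInducing.induced _)

theorem Ideal.exists_mem_forall_notMem_of_forall_not_le {R : Type*} [CommRing R] {I : Ideal R}
    {S : Set (Ideal R)} (hS : S.Finite) (hprime : ∀ p ∈ S, p.IsPrime)
    (hI : ∀ p ∈ S, ¬I ≤ p) : ∃ x ∈ I, ∀ p ∈ S, x ∉ p := by
  by_contra! h
  obtain ⟨p, hpS, hIp⟩ :=
    (Ideal.subset_union_prime_finite hS (f := id) ⊥ ⊥ fun p hp _ _ => hprime p hp).mp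
      fun x hx => by simpa using h x hx
  exact hI p hpS hIp

theorem Ideal.exists_seq_isMaximal_of_infinite {A : Type*} [CommRing A]
    (h : {p : Ideal A | p.IsMaximal}.Infinite) :
    ∃ (p : ℕ → Ideal A) (a : ℕ → A), (∀ n, (p n).IsMaximal) ∧ (∀ n, a n ∈ p (n + 1)) ∧
      ∀ n, ∀ i ≤ n, a n ∉ p i := by
  let e := h.natEmbedding
  let p (n : ℕ) : Ideal A := e n
  have hmax (n : ℕ) : (p n).IsMaximal := (e n).2
  have avoid (n : ℕ) : ∃ x ∈ p (n + 1), ∀ q ∈ p '' Set.Iic n, x ∉ q := by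
    refine Ideal.exists_mem_forall_notMem_of_forall_not_le ((Set.finite_Iic n).image p)
      (by rintro _ ⟨i, -, rfl⟩; exact (hmax i).isPrime) ?_
    rintro _ ⟨i, hi, rfl⟩ hle
    have := e.injective (Subtype.ext ((hmax (n + 1)).eq_of_le (hmax i).ne_top hle))
    simp only [Set.mem_Iic] at hi
    omega
  choose a ha_mem ha_avoid using avoid
  exact ⟨p, a, hmax, ha_mem, fun n i hi => ha_avoid n _ ⟨i, hi, rfl⟩⟩

namespace TotMult

variable {A K : Type*} [CommRing A] [Field K]

theorem apply_ne_zero_of_dvd (f : TotMult A K) {I J : Ideal A} (hJ : J ≠ ⊥) (hIJ : I ∣ J)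
    (hfJ : f.toFun J ≠ 0) : f.toFun I ≠ 0 := by
  obtain ⟨L, rfl⟩ := hIJ
  rw [f.map_mul I L (fun h => hJ (by rw [h, bot_mul])) (fun h => hJ (by rw [h, mul_bot]))] at hfJ
  exact left_ne_zero_of_mul hfJ

theorem apply_ne_zero_iff [IsDedekindDomain A] (f : TotMult A K) {I : Ideal A} (hI : I ≠ ⊥) :
    f.toFun I ≠ 0 ↔ ∀ p : Ideal A, p.IsMaximal → I ≤ p → f.toFun p ≠ 0 := by
  refine ⟨fun hfI p _ hIp => f.apply_ne_zero_of_dvd hI (Ideal.dvd_iff_le.mpr hIp) hfI, ?_⟩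
  induction I using UniqueFactorizationMonoid.induction_on_prime with
  | h₁ => exact absurd Ideal.zero_eq_bot hI
  | h₂ I hunit =>
    rw [Ideal.isUnit_iff.mp hunit, f.map_top]
    exact fun _ => one_ne_zero
  | h₃ I q hI0 hq ih =>
    intro hmax
    have hq0 : q ≠ ⊥ := hq.ne_zero
    rw [f.map_mul q I hq0 hI0]
    exact mul_ne_zero (hmax q ((Ideal.isPrime_of_prime hq).isMaximal hq0) Ideal.mul_le_left)
      (ih hI0 fun p hp hIp => hmax p hp (Ideal.mul_le_right.trans hIp))

theorem mem_Dset_iff [IsDedekindDomain A] {a : A} (ha : a ≠ 0) {f : TotMult A K} :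
    f ∈ Dset A K a ↔ ∀ p : Ideal A, p.IsMaximal → a ∈ p → f.toFun p ≠ 0 := by
  simp only [Dset, Set.mem_ofPred_eq,
    f.apply_ne_zero_iff (Ideal.span_singleton_eq_bot.not.mpr ha), Ideal.span_singleton_le_iff_mem]

theorem isOpen_Dset {a : A} (ha : a ≠ 0) : IsOpen (Dset A K a) :=
  GenerateOpen.basic _ ⟨a, ha, rfl⟩

theorem noetherianSpace_of_finite_maximal [IsDedekindDomain A]
    (h : {p : Ideal A | p.IsMaximal}.Finite) : NoetherianSpace (TotMult A K) := by
  refine noetherianSpace_generateFrom ((h.finite_subsets.image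
    fun S => {f : TotMult A K | ∀ p ∈ S, f.toFun p ≠ 0}).subset ?_)
  rintro _ ⟨a, ha, rfl⟩
  refine ⟨{p | p.IsMaximal ∧ a ∈ p}, fun p hp => hp.1, ?_⟩
  ext f
  simp [mem_Dset_iff ha]

open Classical in
noncomputable def vanishingAt [IsDomain A] (T : Set (Ideal A)) (hT : ∀ p ∈ T, p.IsPrime) :
    TotMult A K where
  toFun I := if I ≠ ⊥ ∧ ∀ p ∈ T, ¬I ≤ p then 1 else 0
  map_top := if_pos ⟨bot_lt_top.ne', fun p hp => (hT p hp).ne_top ∘ top_le_iff.mp⟩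
  map_mul I J hI hJ := by
    have hIJ : (∀ p ∈ T, ¬I * J ≤ p) ↔ (∀ p ∈ T, ¬I ≤ p) ∧ ∀ p ∈ T, ¬J ≤ p := by
      rw [← forall₂_and]
      exact forall₂_congr fun p hp => by rw [(hT p hp).mul_le, not_or]
    simp only [ne_eq, Ideal.mul_eq_bot, hI, hJ, or_self, not_false_eq_true, true_and, hIJ,
      ite_and, boole_mul]
  map_bot := if_neg fun h => h.1 rfl

theorem vanishingAt_mem_Dset_iff [IsDomain A] {T : Set (Ideal A)} {hT : ∀ p ∈ T, p.IsPrime}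
    {a : A} : vanishingAt (K := K) T hT ∈ Dset A K a ↔ a ≠ 0 ∧ ∀ p ∈ T, a ∉ p := by
  simp [Dset, vanishingAt]

theorem finite_maximal_of_noetherianSpace [IsDomain A] [NoetherianSpace (TotMult A K)] :
    {p : Ideal A | p.IsMaximal}.Finite := by
  by_contra hinf
  obtain ⟨p, a, hmax, ha_mem, ha_avoid⟩ := Ideal.exists_seq_isMaximal_of_infinite hinf
  have ha0 (n : ℕ) : a n ≠ 0 := fun h0 => ha_avoid n 0 n.zero_le (h0 ▸ (p 0).zero_mem)
  let U : ℕ →o Opens (TotMult A K) :=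
    ⟨fun n => ⟨⋃ i < n, Dset A K (a i), isOpen_biUnion fun i _ => isOpen_Dset (ha0 i)⟩,
      fun m n hmn => Set.biUnion_subset_biUnion_left fun i (hi : i < m) => hi.trans_le hmn⟩
  have mem_U {n : ℕ} {g : TotMult A K} : g ∈ U n ↔ ∃ i < n, g ∈ Dset A K (a i) := by
    change g ∈ ⋃ i < n, Dset A K (a i) ↔ _
    simp only [Set.mem_iUnion, exists_prop]
  obtain ⟨N, hN⟩ := WellFoundedGT.monotone_chain_condition U
  let f : TotMult A K :=
    vanishingAt (p '' Set.Iic N) (by rintro _ ⟨i, -, rfl⟩; exact (hmax i).isPrime)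
  have hf : f ∈ U (N + 1) :=
    mem_U.mpr ⟨N, N.lt_succ_self, vanishingAt_mem_Dset_iff.mpr
      ⟨ha0 N, by rintro _ ⟨i, hi, rfl⟩; exact ha_avoid N i hi⟩⟩
  rw [← hN (N + 1) N.le_succ] at hf
  obtain ⟨i, hi, hfi⟩ := mem_U.mp hf
  exact (vanishingAt_mem_Dset_iff.mp hfi).2 _ ⟨i + 1, hi, rfl⟩ (ha_mem i)

end TotMult

theorem statement16_general (A K : Type*) [CommRing A] [IsDedekindDomain A] [Field K] :
    TopologicalSpace.NoetherianSpace (TotMult A K) ↔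
      {p : Ideal A | p.IsMaximal}.Finite :=
  ⟨fun _ => TotMult.finite_maximal_of_noetherianSpace (K := K),
    TotMult.noetherianSpace_of_finite_maximal⟩

theorem statement16 (A K : Type*) [CommRing A] [IsDomain A] [IsDedekindDomain A]
    (hA : ¬IsField A) [Field K] :
    TopologicalSpace.NoetherianSpace (TotMult A K) ↔
      {p : Ideal A | p.IsMaximal}.Finite :=
  statement16_general A K
end
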